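/- Every 2-local automorphism Θ of B(H) is multiplicative on pairs in the sense that tr(Θ(x)y) = tr(xy) whenever y is finite-rank and Θ fixes all finite-rank operators; consequently tr((Θ(x) − x) y) = 0 for all finite-rank y. -/

import Mathlib

noncomputable section

variable {H : Type*} [NormedAddCommGroup H] [InnerProductSpace ℂ H] [CompleteSpace H]

/-- A bounded operator has finite rank if its range is finite-dimensional. -/
def FiniteRank (x : H →L[ℂ] H) : Prop :=
  FiniteDimensional ℂ (LinearMap.range (x : H →ₗ[ℂ] H))

/-- A 2-local automorphism: at every pair of points it agrees with some
algebra automorphism of `B(H)`. -/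
def Is2LocalAutomorphism (Θ : (H →L[ℂ] H) → (H →L[ℂ] H)) : Prop :=
  ∀ x y : H →L[ℂ] H, ∃ Ψ : (H →L[ℂ] H) ≃ₐ[ℂ] (H →L[ℂ] H), Θ x = Ψ x ∧ Θ y = Ψ y

/-- The canonical trace, computed along a Hilbert basis. -/
def traceAlong {ι : Type*} (β : HilbertBasis ι ℂ H) (x : H →L[ℂ] H) : ℂ :=
  ∑' i, (inner ℂ (β i) (x (β i)) : ℂ)

/-!
Let `r = ⟪v, ·⟫ u` be a rank-one operator and `Ψ` an automorphism agreeing with `Θ` at `x` and at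
`r`. Then `Ψ r = Θ r = r`, and since `r z r = ⟪v, z u⟫ r` for every operator `z`,
`⟪v, Θ x u⟫ r = r (Ψ x) r = Ψ (r x r) = ⟪v, x u⟫ r`. As `u, v` are arbitrary, `Θ x = x`, and both
trace identities become trivial.
-/

namespace InnerProductSpace

open ContinuousLinearMap

variable {𝕜 E : Type*} [RCLike 𝕜] [NormedAddCommGroup E] [InnerProductSpace 𝕜 E]

lemma rankOne_mul_mul_rankOne (u v : E) (x : E →L[𝕜] E) :
    rankOne 𝕜 u v * x * rankOne 𝕜 u v = inner 𝕜 v (x u) • rankOne 𝕜 u v := by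
  rw [mul_assoc, mul_def x, comp_rankOne, mul_def, rankOne_comp_rankOne]

lemma inner_apply_eq_of_algEquiv_map_rankOne {Ψ : (E →L[𝕜] E) ≃ₐ[𝕜] (E →L[𝕜] E)} {u v : E}
    (hu : u ≠ 0) (hv : v ≠ 0) (hΨ : Ψ (rankOne 𝕜 u v) = rankOne 𝕜 u v) (x : E →L[𝕜] E) :
    inner 𝕜 v (Ψ x u) = inner 𝕜 v (x u) := by
  have h : inner 𝕜 v (Ψ x u) • rankOne 𝕜 u v = inner 𝕜 v (x u) • rankOne 𝕜 u v := by
    rw [← rankOne_mul_mul_rankOne, ← hΨ, ← map_mul, ← map_mul, rankOne_mul_mul_rankOne, map_smul,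
      hΨ]
  exact smul_left_injective 𝕜 (rankOne_ne_zero hu hv) h

end InnerProductSpace

open InnerProductSpace

section

variable {E : Type*} [NormedAddCommGroup E] [InnerProductSpace ℂ E]

lemma finiteRank_rankOne (u v : E) : FiniteRank (rankOne ℂ u v) := by
  have hle : LinearMap.range (rankOne ℂ u v : E →ₗ[ℂ] E) ≤ ℂ ∙ u := by
    rintro _ ⟨h, rfl⟩
    exact Submodule.smul_mem _ _ (Submodule.mem_span_singleton_self u)
  exact Submodule.finiteDimensional_of_le hle

lemma Is2LocalAutomorphism.apply_eq_self_of_fixes_finiteRank {Θ : (E →L[ℂ] E) → (E →L[ℂ] E)}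
    (hΘ : Is2LocalAutomorphism Θ) (hfix : ∀ z : E →L[ℂ] E, FiniteRank z → Θ z = z)
    (x : E →L[ℂ] E) : Θ x = x := by
  refine ContinuousLinearMap.ext fun u => ext_inner_left ℂ fun v => ?_
  rcases eq_or_ne u 0 with rfl | hu
  · simp
  rcases eq_or_ne v 0 with rfl | hv
  · simp
  obtain ⟨Ψ, hx, hr⟩ := hΘ x (rankOne ℂ u v)
  have hΨ : Ψ (rankOne ℂ u v) = rankOne ℂ u v := hr ▸ hfix _ (finiteRank_rankOne u v)
  rw [hx]
  exact inner_apply_eq_of_algEquiv_map_rankOne hu hv hΨ x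

end

theorem twoLocalAutomorphism_trace_eq_general {ι : Type*} (β : HilbertBasis ι ℂ H)
    (Θ : (H →L[ℂ] H) → (H →L[ℂ] H)) (hΘ : Is2LocalAutomorphism Θ)
    (hfix : ∀ z : H →L[ℂ] H, FiniteRank z → Θ z = z)
    (x y : H →L[ℂ] H) :
    traceAlong β (Θ x * y) = traceAlong β (x * y) ∧
    traceAlong β ((Θ x - x) * y) = 0 := by
  rw [hΘ.apply_eq_self_of_fixes_finiteRank hfix x, sub_self, zero_mul]
  exact ⟨rfl, by simp [traceAlong]⟩

theorem twoLocalAutomorphism_trace_eq {ι : Type*} (β : HilbertBasis ι ℂ H)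
    (Θ : (H →L[ℂ] H) → (H →L[ℂ] H)) (hΘ : Is2LocalAutomorphism Θ)
    (hfix : ∀ z : H →L[ℂ] H, FiniteRank z → Θ z = z)
    (x y : H →L[ℂ] H) (hy : FiniteRank y) :
    traceAlong β (Θ x * y) = traceAlong β (x * y) ∧
    traceAlong β ((Θ x - x) * y) = 0 :=
  twoLocalAutomorphism_trace_eq_general β Θ hΘ hfix x y
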